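/- Let X be a normed space and (x_n) a sequence in X. If the set E = {s ∈ S : (∑_{i=1}^n x_{s(i)})_n is bounded} is not all of S, then E is a meager subset of S. -/

import Mathlib

/-- `S`, the Polish space of strictly increasing functions `ℕ → ℕ`,
as a subspace of the product space `ℕ → ℕ`. -/
abbrev IncSeq : Type := {s : ℕ → ℕ // StrictMono s}

/-!
Write `E = ⋃ₘ Fₘ`, where `Fₘ` is the set of `s` whose partial sums are bounded in norm by `m`.
Each `Fₘ` is closed, since every partial sum depends on finitely many values of `s`. It has
empty interior: a basic neighbourhood of `t` only fixes `t 0, …, t (k - 1)`, and following these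
values by a tail of some `s₀ ∉ E` gives a point of the neighbourhood whose partial sums differ
from shifted partial sums of `s₀` by bounded amounts, hence are unbounded, so it is not in `Fₘ`.
-/

open Filter Set Finset

namespace IncSeq

lemma exists_forall_eq_imp_mem_of_mem_nhds {t : IncSeq} {F : Set IncSeq} (hF : F ∈ nhds t) :
    ∃ k : ℕ, ∀ s : IncSeq, (∀ i < k, s.1 i = t.1 i) → s ∈ F := by
  rw [nhds_subtype_eq_comap, mem_comap] at hF
  obtain ⟨V, hV, hVF⟩ := hF
  rw [nhds_pi, Filter.mem_pi] at hV
  obtain ⟨I, hI, T, hT, hIT⟩ := hV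
  simp only [nhds_discrete, mem_pure] at hT
  obtain ⟨k, hk⟩ := hI.bddAbove
  refine ⟨k + 1, fun s hs => hVF <| hIT fun i hi => ?_⟩
  rw [hs i (Nat.lt_succ_of_le (hk hi))]
  exact hT i

/-- Starting the tail of `s` at index `t k` keeps the result increasing. -/
def splice (t s : IncSeq) (k : ℕ) : IncSeq :=
  ⟨fun i => if i < k then t.1 i else s.1 (i - k + t.1 k), by
    intro i j hij
    dsimp only
    split_ifs with hi hj hj
    · exact t.2 hij
    · calc t.1 i < t.1 k := t.2 hi
        _ ≤ s.1 (t.1 k) := s.2.id_le _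
        _ ≤ s.1 (j - k + t.1 k) := s.2.monotone (by omega)
    · omega
    · exact s.2 (by omega)⟩

lemma splice_apply_of_lt (t s : IncSeq) {k i : ℕ} (hi : i < k) : (splice t s k).1 i = t.1 i :=
  if_pos hi

lemma splice_apply_add (t s : IncSeq) (k j : ℕ) :
    (splice t s k).1 (k + j) = s.1 (t.1 k + j) := by
  simp only [splice, if_neg (Nat.not_lt.2 (Nat.le_add_right k j)), Nat.add_sub_cancel_left,
    add_comm j]

variable {X : Type*} [AddCommMonoid X]

lemma sum_range_splice (x : ℕ → X) (t s : IncSeq) (k j : ℕ) :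
    ∑ i ∈ range (k + j), x ((splice t s k).1 i) =
      ∑ i ∈ range k, x (t.1 i) + ∑ i ∈ range j, x (s.1 (t.1 k + i)) := by
  rw [sum_range_add]
  congr 1
  · exact sum_congr rfl fun i hi => by rw [splice_apply_of_lt t s (mem_range.1 hi)]
  · simp only [splice_apply_add]

end IncSeq

lemma exists_forall_le_of_forall_add_le {u : ℕ → ℝ} {M : ℝ} (N : ℕ) (h : ∀ j, u (N + j) ≤ M) :
    ∃ M', ∀ n, u n ≤ M' := by
  have hev : ∀ᶠ n in atTop, u n ≤ M :=
    eventually_atTop.2 ⟨N, fun n hn => by simpa [Nat.add_sub_cancel' hn] using h (n - N)⟩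
  obtain ⟨M', hM'⟩ := (isBoundedUnder_of_eventually_le hev).bddAbove_range
  exact ⟨M', fun n => hM' (Set.mem_range_self n)⟩

section PartialSums

open IncSeq

variable {X : Type*} [SeminormedAddCommGroup X] (x : ℕ → X)

def boundedSubseriesLE (M : ℝ) : Set IncSeq :=
  {s | ∀ n, ‖∑ i ∈ range n, x (s.1 i)‖ ≤ M}

def boundedSubseries : Set IncSeq :=
  {s | ∃ M : ℝ, ∀ n, ‖∑ i ∈ range n, x (s.1 i)‖ ≤ M}

lemma boundedSubseries_subset_iUnion : boundedSubseries x ⊆ ⋃ m : ℕ, boundedSubseriesLE x m :=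
  fun _ ⟨M, hM⟩ => mem_iUnion.2 ⟨⌈M⌉₊, fun n => (hM n).trans (Nat.le_ceil M)⟩

lemma continuous_sum_range_apply (n : ℕ) :
    Continuous fun s : IncSeq => ∑ i ∈ range n, x (s.1 i) :=
  continuous_finsetSum _ fun i _ =>
    continuous_of_discreteTopology.comp ((continuous_apply i).comp continuous_subtype_val)

lemma isClosed_boundedSubseriesLE (M : ℝ) : IsClosed (boundedSubseriesLE x M) := by
  simp only [boundedSubseriesLE, Set.ofPred_forall]
  exact isClosed_iInter fun n => isClosed_le (continuous_sum_range_apply x n).norm continuous_const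

lemma mem_boundedSubseries_of_splice_mem {t s : IncSeq} {k : ℕ}
    (h : splice t s k ∈ boundedSubseries x) : s ∈ boundedSubseries x := by
  obtain ⟨M, hM⟩ := h
  set P : ℕ → X := fun n => ∑ i ∈ range n, x (s.1 i)
  set C := ∑ i ∈ range k, x (t.1 i)
  have htail (j : ℕ) : ‖P (t.1 k + j)‖ ≤ M + ‖C‖ + ‖P (t.1 k)‖ := by
    set Q := ∑ i ∈ range j, x (s.1 (t.1 k + i))
    have hsplit : P (t.1 k + j) = Q + P (t.1 k) := (sum_range_add _ _ _).trans (add_comm _ _)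
    have hbound : ‖C + Q‖ ≤ M := sum_range_splice x t s k j ▸ hM (k + j)
    calc ‖P (t.1 k + j)‖ ≤ ‖Q‖ + ‖P (t.1 k)‖ := hsplit ▸ norm_add_le _ _
      _ ≤ ‖C + Q‖ + ‖C‖ + ‖P (t.1 k)‖ := by gcongr; exact norm_le_add_norm_add' C Q
      _ ≤ M + ‖C‖ + ‖P (t.1 k)‖ := by gcongr
  exact exists_forall_le_of_forall_add_le (u := fun n => ‖P n‖) _ htail

lemma interior_boundedSubseriesLE_eq_empty {s₀ : IncSeq} (hs₀ : s₀ ∉ boundedSubseries x)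
    (M : ℝ) : interior (boundedSubseriesLE x M) = ∅ := by
  refine eq_empty_of_forall_notMem fun t ht => hs₀ ?_
  obtain ⟨k, hk⟩ := exists_forall_eq_imp_mem_of_mem_nhds (mem_interior_iff_mem_nhds.1 ht)
  exact mem_boundedSubseries_of_splice_mem x
    ⟨M, hk _ fun i hi => splice_apply_of_lt t s₀ hi⟩

lemma isMeagre_boundedSubseries (h : boundedSubseries x ≠ univ) :
    IsMeagre (boundedSubseries x) := by
  obtain ⟨s₀, hs₀⟩ := (ne_univ_iff_exists_notMem _).1 h
  refine (isMeagre_iUnion fun m : ℕ => ?_).mono (boundedSubseries_subset_iUnion x)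
  exact ((isClosed_boundedSubseriesLE x m).isNowhereDense_iff.2
    (interior_boundedSubseriesLE_eq_empty x hs₀ m)).isMeagre

end PartialSums

theorem E_meager_of_ne_univ_general
    {X : Type*} [NormedAddCommGroup X] (x : ℕ → X)
    (h : {s : IncSeq | ∃ M : ℝ, ∀ n : ℕ, ‖∑ i ∈ Finset.range n, x (s.1 i)‖ ≤ M} ≠
      Set.univ) :
    IsMeagre {s : IncSeq | ∃ M : ℝ, ∀ n : ℕ, ‖∑ i ∈ Finset.range n, x (s.1 i)‖ ≤ M} :=
  isMeagre_boundedSubseries x h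

theorem E_meager_of_ne_univ
    {X : Type*} [NormedAddCommGroup X] [NormedSpace ℝ X] (x : ℕ → X)
    (h : {s : IncSeq | ∃ M : ℝ, ∀ n : ℕ, ‖∑ i ∈ Finset.range n, x (s.1 i)‖ ≤ M} ≠
      Set.univ) :
    IsMeagre {s : IncSeq | ∃ M : ℝ, ∀ n : ℕ, ‖∑ i ∈ Finset.range n, x (s.1 i)‖ ≤ M} :=
  E_meager_of_ne_univ_general x h
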